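/- Let (M, m₀) and (Y, y₀) be pointed topological spaces and A an abelian group regarded as a discrete space. If H : M × [0,1] → Y is a pointed homotopy between pointed continuous maps f, g : M → Y (i.e. H is continuous, H(-,0) = f, H(-,1) = g, and H(m₀, t) = y₀ for all t), then the map H' : Sym(M;A) × [0,1] → Sym(Y;A) defined by H'(l, t) = Sym(H(-,t);A)(l) is a continuous pointed homotopy from Sym(f;A) to Sym(g;A). -/

import Mathlib

/-- Underlying set of the infinite symmetric product: finitely supported
labelings of `M` by `A` vanishing at the basepoint `m₀`. -/
def SymProd (M : Type) (A : Type) [AddCommGroup A] (m₀ : M) : Type := {l : M →₀ A // l m₀ = 0}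

/-- The structure maps `Mⁿ × Aⁿ → SymProd(M;A)`. -/
noncomputable def symF (M : Type) (A : Type) [AddCommGroup A] (m₀ : M) (n : ℕ)
    (c : Fin n → M) (a : Fin n → A) : SymProd M A m₀ :=
  ⟨(∑ i, Finsupp.single (c i) (a i)) - Finsupp.single m₀ ((∑ i, Finsupp.single (c i) (a i)) m₀),
    by simp⟩

/-- The topology on `SymProd(M;A)`: the finest topology making all structure maps
continuous, where `Mⁿ` has the product topology and `Aⁿ` the product of discrete
topologies. -/
noncomputable instance symTop (M : Type) [TopologicalSpace M] (A : Type) [AddCommGroup A]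
    (m₀ : M) : TopologicalSpace (SymProd M A m₀) :=
  ⨆ n : ℕ, TopologicalSpace.coinduced
    (fun p : (Fin n → M) × (Fin n → A) => symF M A m₀ n p.1 p.2)
    (@instTopologicalSpaceProd _ _ inferInstance
      (@Pi.topologicalSpace (Fin n) (fun _ => A) (fun _ => ⊥)))

/-- The basepoint of `SymProd(M;A)`: the zero labeling. -/
def symZero (M : Type) (A : Type) [AddCommGroup A] (m₀ : M) : SymProd M A m₀ := ⟨0, by simp⟩

/-- The pushforward `SymProd(f;A)` of a pointed map `f`. -/
noncomputable def symMap {M Y : Type} (A : Type) [AddCommGroup A] (f : M → Y)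
    (m₀ : M) (y₀ : Y) (l : SymProd M A m₀) : SymProd Y A y₀ :=
  ⟨Finsupp.mapDomain f l.1 - Finsupp.single y₀ (Finsupp.mapDomain f l.1 y₀), by simp⟩

/-- Pointed homotopy of pointed maps. -/
def PtdHomotopic {X Y : Type} [TopologicalSpace X] [TopologicalSpace Y]
    (x₀ : X) (y₀ : Y) (f g : X → Y) : Prop :=
  ∃ H : X × unitInterval → Y, Continuous H ∧ (∀ x, H (x, 0) = f x) ∧ (∀ x, H (x, 1) = g x) ∧
    ∀ t, H (x₀, t) = y₀

/-! Pushforward along a pointed map commutes with the structure maps, so on each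
`Mⁿ × Aⁿ × [0,1]` the homotopy `H'` is `fₙ ∘ (Hⁿ × id)`, which is continuous. Since `[0,1]` is
locally compact, the product of the quotient map `∐ₙ Mⁿ × Aⁿ → Sym(M;A)` with `[0,1]` is still a
quotient map, which gives the continuity of `H'` itself. -/

section

variable {M : Type} {A : Type} [AddCommGroup A] {m₀ : M}

theorem exists_symF_eq (l : SymProd M A m₀) :
    ∃ n c a, symF M A m₀ n c a = l := by
  obtain ⟨l, hl⟩ := l
  let e := l.support.equivFin
  refine ⟨l.support.card, fun i => e.symm i, fun i => l (e.symm i), Subtype.ext ?_⟩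
  have hsum : ∑ i, Finsupp.single (e.symm i : M) (l (e.symm i)) = l := by
    rw [e.symm.sum_comp (fun x : l.support => Finsupp.single (x : M) (l x)),
      Finset.sum_coe_sort l.support (fun x => Finsupp.single x (l x))]
    exact l.sum_single
  simp only [symF, hsum, hl, Finsupp.single_zero, sub_zero]

theorem symMap_symF {Y : Type} (f : M → Y) (y₀ : Y) (hf : f m₀ = y₀) (n : ℕ)
    (c : Fin n → M) (a : Fin n → A) :
    symMap A f m₀ y₀ (symF M A m₀ n c a) = symF Y A y₀ n (fun i => f (c i)) a := by
  apply Subtype.ext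
  simp only [symMap, symF, Finsupp.mapDomain_sub, Finsupp.mapDomain_finsetSum,
    Finsupp.mapDomain_single, hf, Finsupp.sub_apply, Finsupp.single_eq_same, Finsupp.single_sub]
  abel

theorem symMap_symZero {Y : Type} (f : M → Y) (y₀ : Y) :
    symMap A f m₀ y₀ (symZero M A m₀) = symZero Y A y₀ :=
  Subtype.ext (by simp [symMap, symZero])

end

section

variable {M : Type} [TopologicalSpace M] {A : Type} [AddCommGroup A] [TopologicalSpace A]
  [DiscreteTopology A] {m₀ : M}

theorem continuous_symF (n : ℕ) :
    Continuous fun p : (Fin n → M) × (Fin n → A) => symF M A m₀ n p.1 p.2 := by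
  obtain rfl := DiscreteTopology.eq_bot (α := A)
  exact continuous_iSup_rng (i := n) continuous_coinduced_rng

theorem isQuotientMap_sigma_symF :
    Topology.IsQuotientMap fun p : Σ n, (Fin n → M) × (Fin n → A) =>
      symF M A m₀ p.1 p.2.1 p.2.2 := by
  refine ⟨⟨?_⟩, fun l => ?_⟩
  · obtain rfl := DiscreteTopology.eq_bot (α := A)
    let : TopologicalSpace A := ⊥
    change symTop M A m₀ =
      TopologicalSpace.coinduced _ (⨆ n, TopologicalSpace.coinduced (Sigma.mk n) _)
    simp only [coinduced_iSup, coinduced_compose]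
    rfl
  · obtain ⟨n, c, a, rfl⟩ := exists_symF_eq l
    exact ⟨⟨n, c, a⟩, rfl⟩

theorem continuous_prod_of_continuous_symF {X Z : Type*} [TopologicalSpace X]
    [LocallyCompactSpace X] [TopologicalSpace Z] {F : SymProd M A m₀ × X → Z}
    (hF : ∀ n, Continuous fun q : ((Fin n → M) × (Fin n → A)) × X =>
      F (symF M A m₀ n q.1.1 q.1.2, q.2)) :
    Continuous F :=
  isQuotientMap_sigma_symF.continuous_lift_prod_left
    ((continuous_sigma (f := fun p : Σ n, ((Fin n → M) × (Fin n → A)) × X =>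
      F (symF M A m₀ p.1 p.2.1.1 p.2.1.2, p.2.2)) hF).comp Homeomorph.sigmaProdDistrib.continuous)

end

theorem symMap_homotopy_general
    (M Y : Type) [TopologicalSpace M] [TopologicalSpace Y]
    (A : Type) [AddCommGroup A] (m₀ : M) (y₀ : Y)
    (f g : M → Y)
    (H : M × unitInterval → Y) (hH : Continuous H)
    (H0 : ∀ x, H (x, 0) = f x) (H1 : ∀ x, H (x, 1) = g x)
    (Hbase : ∀ t, H (m₀, t) = y₀) :
    Continuous (fun p : SymProd M A m₀ × unitInterval =>
        symMap A (fun x => H (x, p.2)) m₀ y₀ p.1) ∧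
    (∀ l : SymProd M A m₀, symMap A (fun x => H (x, 0)) m₀ y₀ l = symMap A f m₀ y₀ l) ∧
    (∀ l : SymProd M A m₀, symMap A (fun x => H (x, 1)) m₀ y₀ l = symMap A g m₀ y₀ l) ∧
    (∀ t : unitInterval, symMap A (fun x => H (x, t)) m₀ y₀ (symZero M A m₀) = symZero Y A y₀) := by
  let : TopologicalSpace A := ⊥
  have : DiscreteTopology A := ⟨rfl⟩
  refine ⟨continuous_prod_of_continuous_symF fun n => ?_, fun l => by simp only [H0],
    fun l => by simp only [H1], fun t => symMap_symZero _ y₀⟩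
  have hpaths : Continuous fun q : ((Fin n → M) × (Fin n → A)) × unitInterval =>
      fun i => H (q.1.1 i, q.2) :=
    continuous_pi fun i =>
      hH.comp (((continuous_apply i).comp continuous_fst.fst).prodMk continuous_snd)
  exact ((continuous_symF n).comp (hpaths.prodMk continuous_fst.snd)).congr fun q =>
    (symMap_symF (fun x => H (x, q.2)) y₀ (Hbase q.2) n _ _).symm

/-- If `H : M × [0,1] → Y` is a pointed homotopy between pointed
continuous maps `f, g : M → Y`, then `H'(l,t) = Sym(H(-,t);A)(l)` is a continuous
pointed homotopy from `Sym(f;A)` to `Sym(g;A)`. -/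
theorem symMap_homotopy
    (M Y : Type) [TopologicalSpace M] [TopologicalSpace Y]
    (A : Type) [AddCommGroup A] (m₀ : M) (y₀ : Y)
    (f g : M → Y) (hf : Continuous f) (hg : Continuous g)
    (hf₀ : f m₀ = y₀) (hg₀ : g m₀ = y₀)
    (H : M × unitInterval → Y) (hH : Continuous H)
    (H0 : ∀ x, H (x, 0) = f x) (H1 : ∀ x, H (x, 1) = g x)
    (Hbase : ∀ t, H (m₀, t) = y₀) :
    Continuous (fun p : SymProd M A m₀ × unitInterval =>
        symMap A (fun x => H (x, p.2)) m₀ y₀ p.1) ∧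
    (∀ l : SymProd M A m₀, symMap A (fun x => H (x, 0)) m₀ y₀ l = symMap A f m₀ y₀ l) ∧
    (∀ l : SymProd M A m₀, symMap A (fun x => H (x, 1)) m₀ y₀ l = symMap A g m₀ y₀ l) ∧
    (∀ t : unitInterval, symMap A (fun x => H (x, t)) m₀ y₀ (symZero M A m₀) = symZero Y A y₀) :=
  symMap_homotopy_general M Y A m₀ y₀ f g H hH H0 H1 Hbase
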